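/- arXiv:1411.2240 — 6 statements merged into one kernel-verified Lean document; each statement's English description precedes it below -/
import Mathlib

section
/- Let k be a field and A a k-finite category. Let D : A ≌ A^op be a k-linear equivalence such that every simple object of A is self-dual, and let P be a projective self-dual object of A. Set R := (End_A(P))^op, so that for each object X, Hom_A(P, X) is a left R-module (via precomposition with endomorphisms of P) and Hom_A(X, P) is a right R-module (via postcomposition). Assume R, which is a finite-dimensional k-algebra, is a symmetric Frobenius k-algebra. Then there is an isomorphism of functors from A to the category of left R-modules between X ↦ Hom_A(P, X) and X ↦ Hom_k(Hom_A(X, P), k), where the k-linear dual of the right R-module Hom_A(X, P) carries its induced left R-module structure. -/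
open CategoryTheory Limits

/-- A symmetric Frobenius form on a `k`-algebra `R`: a `k`-bilinear form that is
symmetric, nondegenerate and associative (`B (x * y) z = B x (y * z)`). -/
structure SymmetricFrobeniusForm (k R : Type*) [Field k] [Ring R] [Algebra k R] where
  B : R →ₗ[k] R →ₗ[k] k
  symmetric : ∀ x y, B x y = B y x
  nondegenerate : ∀ x, (∀ y, B x y = 0) → x = 0
  assoc : ∀ x y z, B (x * y) z = B x (y * z)

/-- `R` is a symmetric Frobenius `k`-algebra: it is finite-dimensional over `k` and
admits a symmetric, nondegenerate, associative `k`-bilinear form. -/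
def IsSymmetricFrobenius (k R : Type*) [Field k] [Ring R] [Algebra k R] : Prop :=
  FiniteDimensional k R ∧ Nonempty (SymmetricFrobeniusForm k R)

/-- An object `X` of an abelian category has a finite composition series: a finite chain
`0 = X₀ ↪ X₁ ↪ ⋯ ↪ Xₙ = X` of subobjects (monomorphisms) whose successive quotients
(cokernels) are simple. -/
def HasFiniteCompositionSeries {C : Type*} [Category C] [Abelian C] (X : C) : Prop :=
  ∃ (n : ℕ) (F : Fin (n + 1) → C) (f : ∀ i : Fin n, F i.castSucc ⟶ F i.succ),
    IsZero (F 0) ∧ Nonempty (F (Fin.last n) ≅ X) ∧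
      ∀ i : Fin n, Mono (f i) ∧ Simple (cokernel (f i))
/-!
A symmetric Frobenius form `B` on `(End P)ᵐᵒᵖ` gives a symmetric nondegenerate trace
`t = B (·, 1)` on `End P`, and `(f, g) ↦ t (f ≫ g)` pairs `Hom(P, X)` with `Hom(X, P)`; symmetry
of `t` makes this pairing `R`-balanced, and it is natural in `X` by associativity. As the
Hom-spaces are finite-dimensional, it is perfect once `f ≫ g ≠ 0` can always be arranged on
either side. For `f : P ⟶ X` nonzero, the image of `f`
has a simple quotient `Q`; self-duality of `P` and `Q` turns the nonzero map `P ⟶ Q` into a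
nonzero `Q ⟶ P`, which extends to `g : X ⟶ P` because `P`, being projective and self-dual, is
injective. The other side is dual, using a simple subobject of the image and projectivity.
-/

namespace HasFiniteCompositionSeries

variable {C : Type*} [Category C] [Abelian C] {X : C}

lemma exists_simple_mono (h : HasFiniteCompositionSeries X) (hX : ¬IsZero X) :
    ∃ (S : C) (s : S ⟶ X), Simple S ∧ Mono s := by
  obtain ⟨n, F, f, h0, ⟨e⟩, hf⟩ := h
  have step : ∀ j, IsZero (F j) ∨ ∃ (S : C) (s : S ⟶ F j), Simple S ∧ Mono s := by
    intro j
    induction j using Fin.induction with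
    | zero => exact .inl h0
    | succ i ih =>
      have := (hf i).1
      have := (hf i).2
      refine .inr ?_
      rcases ih with hzero | ⟨S, s, hS, hs⟩
      · -- `f i` is zero, so `F i.succ` is its own cokernel
        have hcoker : F i.succ ≅ cokernel (f i) :=
          (cokernelIsoOfEq (hzero.eq_of_src (f i) 0) ≪≫ cokernelZeroIsoTarget).symm
        exact ⟨F i.succ, 𝟙 _, Simple.of_iso hcoker, inferInstance⟩
      · exact ⟨S, s ≫ f i, hS, mono_comp _ _⟩
  rcases step (Fin.last n) with hzero | ⟨S, s, hS, hs⟩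
  · exact absurd (hzero.of_iso e.symm) hX
  · exact ⟨S, s ≫ e.hom, hS, mono_comp _ _⟩

lemma exists_simple_epi (h : HasFiniteCompositionSeries X) (hX : ¬IsZero X) :
    ∃ (Q : C) (q : X ⟶ Q), Simple Q ∧ Epi q := by
  obtain ⟨n, F, f, h0, ⟨e⟩, hf⟩ := h
  cases n with
  | zero => exact absurd (h0.of_iso e.symm) hX
  | succ m =>
    refine ⟨cokernel (f (Fin.last m)),
      e.inv ≫ eqToHom (congrArg F (Fin.succ_last m).symm) ≫ cokernel.π _, (hf _).2, ?_⟩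
    infer_instance

end HasFiniteCompositionSeries

lemma Abelian.not_isZero_image_of_ne_zero {C : Type*} [Category C] [Abelian C] {X Y : C}
    {f : X ⟶ Y} (hf : f ≠ 0) : ¬IsZero (Abelian.image f) := fun h =>
  hf (by rw [← Abelian.image.fac f, h.eq_of_src (Abelian.image.ι f) 0, comp_zero])

section SelfDual

variable {A : Type*} [Category A]

def IsSelfDual (D : A ≌ Aᵒᵖ) (X : A) : Prop :=
  Nonempty ((D.functor.obj X).unop ≅ X)

variable {D : A ≌ Aᵒᵖ}

lemma IsSelfDual.exists_ne_zero [HasZeroMorphisms A] {X Y : A} (hX : IsSelfDual D X)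
    (hY : IsSelfDual D Y) {u : X ⟶ Y} (hu : u ≠ 0) : ∃ v : Y ⟶ X, v ≠ 0 := by
  refine ⟨hY.some.inv ≫ (D.functor.map u).unop ≫ hX.some.hom, fun hv => hu ?_⟩
  have hDu : D.functor.map u = 0 := Quiver.Hom.unop_inj <| by
    simpa using congrArg (fun t => hY.some.hom ≫ t ≫ hX.some.inv) hv
  exact D.functor.map_injective (by rw [hDu, Functor.map_zero])

lemma IsSelfDual.injective [Preadditive A] {P : A} [Projective P] (hP : IsSelfDual D P) :
    Injective P :=
  have : Projective (D.functor.obj P) := (D.map_projective_iff P).mpr inferInstance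
  Injective.of_iso hP.some inferInstance

end SelfDual

section Nondegeneracy

variable {A : Type*} [Category A] [Abelian A] (hlen : ∀ X : A, HasFiniteCompositionSeries X)
  {D : A ≌ Aᵒᵖ} (hsimple : ∀ S : A, Simple S → IsSelfDual D S) {P : A} (hP : IsSelfDual D P)
include hlen hsimple hP

lemma exists_comp_ne_zero_of_injective_of_isSelfDual [Injective P] {X : A} {f : P ⟶ X}
    (hf : f ≠ 0) : ∃ g : X ⟶ P, f ≫ g ≠ 0 := by
  obtain ⟨Q, q, hQ, hq⟩ :=
    (hlen _).exists_simple_epi (Abelian.not_isZero_image_of_ne_zero hf)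
  set u := Abelian.factorThruImage f ≫ q
  have hu : u ≠ 0 := fun h => by
    have : Epi (0 : P ⟶ Q) := h ▸ epi_comp _ _
    exact Simple.not_isZero Q (IsZero.of_epi_zero P Q)
  obtain ⟨v, hv⟩ := hP.exists_ne_zero (hsimple Q hQ) hu
  refine ⟨Injective.factorThru (q ≫ v) (Abelian.image.ι f),
    fun h => hv (zero_of_epi_comp u ?_)⟩
  calc u ≫ v = Abelian.factorThruImage f ≫ Abelian.image.ι f ≫
        Injective.factorThru (q ≫ v) (Abelian.image.ι f) := by
        rw [Injective.comp_factorThru, Category.assoc]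
    _ = 0 := by rw [← Category.assoc, Abelian.image.fac, h]

lemma exists_comp_ne_zero_of_projective_of_isSelfDual [Projective P] {X : A} {g : X ⟶ P}
    (hg : g ≠ 0) : ∃ f : P ⟶ X, f ≫ g ≠ 0 := by
  obtain ⟨S, s, hS, hs⟩ :=
    (hlen _).exists_simple_mono (Abelian.not_isZero_image_of_ne_zero hg)
  set u := s ≫ Abelian.image.ι g
  have hu : u ≠ 0 := fun h => by
    have : Mono (0 : S ⟶ P) := h ▸ mono_comp _ _
    exact Simple.not_isZero S (IsZero.of_mono_zero S P)
  obtain ⟨v, hv⟩ := (hsimple S hS).exists_ne_zero hP hu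
  refine ⟨Projective.factorThru (v ≫ s) (Abelian.factorThruImage g),
    fun h => hv (zero_of_comp_mono u ?_)⟩
  calc v ≫ u = (Projective.factorThru (v ≫ s) (Abelian.factorThruImage g) ≫
        Abelian.factorThruImage g) ≫ Abelian.image.ι g := by
        rw [Projective.factorThru_comp, Category.assoc]
    _ = 0 := by rw [Category.assoc, Abelian.image.fac, h]

end Nondegeneracy

namespace SymmetricFrobeniusForm

variable {k R : Type*} [Field k] [Ring R] [Algebra k R] (Φ : SymmetricFrobeniusForm k R)

def trace : R →ₗ[k] k := Φ.B.flip 1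

lemma B_eq_trace_mul (x y : R) : Φ.B x y = Φ.trace (x * y) := by
  simp [trace, Φ.assoc]

lemma trace_mul_comm (x y : R) : Φ.trace (x * y) = Φ.trace (y * x) := by
  rw [← B_eq_trace_mul, ← B_eq_trace_mul, Φ.symmetric]

lemma eq_zero_of_forall_trace_mul_eq_zero {x : R} (h : ∀ y, Φ.trace (x * y) = 0) : x = 0 :=
  Φ.nondegenerate x fun y => (Φ.B_eq_trace_mul x y).trans (h y)

end SymmetricFrobeniusForm

section HomPairing

variable {k : Type*} [CommRing k] {A : Type*} [Category A] [Preadditive A] [Linear k A] {P : A}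

def homPairing (t : (P ⟶ P) →ₗ[k] k) (X : A) : (P ⟶ X) →ₗ[k] (X ⟶ P) →ₗ[k] k :=
  (Linear.comp P X P).compr₂ t

@[simp]
lemma homPairing_apply (t : (P ⟶ P) →ₗ[k] k) {X : A} (f : P ⟶ X) (g : X ⟶ P) :
    homPairing t X f g = t (f ≫ g) :=
  rfl

variable {t : (P ⟶ P) →ₗ[k] k} (hnondeg : ∀ r : P ⟶ P, (∀ s, t (r ≫ s) = 0) → r = 0)
  {X : A}
include hnondeg

lemma homPairing_injective (hX : ∀ f : P ⟶ X, f ≠ 0 → ∃ g : X ⟶ P, f ≫ g ≠ 0) :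
    Function.Injective (homPairing t X) := by
  refine (injective_iff_map_eq_zero _).2 fun f hf => by_contra fun hf0 => ?_
  obtain ⟨g, hg⟩ := hX f hf0
  exact hg (hnondeg _ fun s => by simpa using LinearMap.congr_fun hf (g ≫ s))

lemma homPairing_flip_injective (hcomm : ∀ r s : P ⟶ P, t (r ≫ s) = t (s ≫ r))
    (hX : ∀ g : X ⟶ P, g ≠ 0 → ∃ f : P ⟶ X, f ≫ g ≠ 0) :
    Function.Injective (homPairing t X).flip := by
  refine (injective_iff_map_eq_zero _).2 fun g hg => by_contra fun hg0 => ?_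
  obtain ⟨f, hf⟩ := hX g hg0
  exact hf (hnondeg _ fun s => by rw [hcomm]; simpa using LinearMap.congr_fun hg (s ≫ f))

end HomPairing

theorem hom_from_projective_iso_dual_hom_to_projective_general
    (k : Type*) [Field k] {A : Type*} [Category A] [Abelian A] [Linear k A]
    (hlen : ∀ X : A, HasFiniteCompositionSeries X)
    (hfin : ∀ X Y : A, FiniteDimensional k (X ⟶ Y))
    (D : A ≌ Aᵒᵖ)
    (hsimple : ∀ S : A, Simple S → Nonempty ((D.functor.obj S).unop ≅ S))
    (P : A) [Projective P] (hP : Nonempty ((D.functor.obj P).unop ≅ P))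
    (hfrob : IsSymmetricFrobenius k (CategoryTheory.End P)ᵐᵒᵖ) :
    ∃ e : ∀ X : A, (P ⟶ X) ≃ₗ[k] ((X ⟶ P) →ₗ[k] k),
      (∀ (X : A) (r : P ⟶ P) (f : P ⟶ X) (g : X ⟶ P),
        e X (r ≫ f) g = e X f (g ≫ r)) ∧
      (∀ (X Y : A) (φ : X ⟶ Y) (f : P ⟶ X) (g : Y ⟶ P),
        e Y (f ≫ φ) g = e X f (φ ≫ g)) := by
  obtain ⟨-, ⟨Φ⟩⟩ := hfrob
  -- `op r * op s = op (r ≫ s)` in `(End P)ᵐᵒᵖ`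
  let t : (P ⟶ P) →ₗ[k] k := Φ.trace ∘ₗ (MulOpposite.opLinearEquiv k).toLinearMap
  have hnondeg : ∀ r : P ⟶ P, (∀ s, t (r ≫ s) = 0) → r = 0 := fun r h =>
    MulOpposite.op_eq_zero_iff r |>.mp <|
      Φ.eq_zero_of_forall_trace_mul_eq_zero fun s => h s.unop
  have hcomm : ∀ r s : P ⟶ P, t (r ≫ s) = t (s ≫ r) := fun r s =>
    Φ.trace_mul_comm (.op r) (.op s)
  have : Injective P := IsSelfDual.injective hP
  have hperf (X : A) : (homPairing t X).IsPerfPair :=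
    have := hfin P X
    .of_injective
      (homPairing_injective hnondeg fun _ =>
        exists_comp_ne_zero_of_injective_of_isSelfDual hlen hsimple hP)
      (homPairing_flip_injective hnondeg hcomm fun _ =>
        exists_comp_ne_zero_of_projective_of_isSelfDual hlen hsimple hP)
  refine ⟨fun X => (homPairing t X).toPerfPair, fun X r f g => ?_, fun X Y φ f g => ?_⟩
  · simpa using hcomm r (f ≫ g)
  · simp

/-- Let `k` be a field, `A` a `k`-finite category (a `k`-linear abelian
category in which every object has a finite composition series and all Hom-spaces are
finite-dimensional), `D : A ≌ Aᵒᵖ` a `k`-linear equivalence under which every simple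
object is self-dual, and `P` a projective self-dual object. Assume that
`R := (End P)ᵐᵒᵖ` is a symmetric Frobenius `k`-algebra. Then the functors
`X ↦ Hom_A(P, X)` and `X ↦ Hom_k(Hom_A(X, P), k)` from `A` to left `R`-modules are
isomorphic: there is a family of `k`-linear equivalences
`e X : Hom(P, X) ≃ Hom_k(Hom(X, P), k)` which intertwines the left `R`-module structures
(given by precomposition `f ↦ r ≫ f` on `Hom(P, X)`, and by dualizing the right
`R`-module structure `g ↦ g ≫ r` by postcomposition on `Hom(X, P)`) and which is
natural in `X`. -/
theorem hom_from_projective_iso_dual_hom_to_projective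
    (k : Type*) [Field k] {A : Type*} [Category A] [Abelian A] [Linear k A]
    (hlen : ∀ X : A, HasFiniteCompositionSeries X)
    (hfin : ∀ X Y : A, FiniteDimensional k (X ⟶ Y))
    (D : A ≌ Aᵒᵖ) [D.functor.Additive]
    (hDlin : ∀ (X Y : A) (c : k) (f : X ⟶ Y),
      (D.functor.map (c • f)).unop = c • (D.functor.map f).unop)
    (hsimple : ∀ S : A, Simple S → Nonempty ((D.functor.obj S).unop ≅ S))
    (P : A) [Projective P] (hP : Nonempty ((D.functor.obj P).unop ≅ P))
    (hfrob : IsSymmetricFrobenius k (CategoryTheory.End P)ᵐᵒᵖ) :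
    ∃ e : ∀ X : A, (P ⟶ X) ≃ₗ[k] ((X ⟶ P) →ₗ[k] k),
      (∀ (X : A) (r : P ⟶ P) (f : P ⟶ X) (g : X ⟶ P),
        e X (r ≫ f) g = e X f (g ≫ r)) ∧
      (∀ (X Y : A) (φ : X ⟶ Y) (f : P ⟶ X) (g : Y ⟶ P),
        e Y (f ≫ φ) g = e X f (φ ≫ g)) :=
  hom_from_projective_iso_dual_hom_to_projective_general k hlen hfin D hsimple P hP hfrob
end

section
/- Let k be a field and A a k-finite category. Let D : A ≌ A^op be a k-linear equivalence such that every simple object of A is self-dual, and let P be a projective self-dual object of A. Then for every object X of A, the k-vector spaces Hom_A(P, X) and Hom_A(X, P) have equal (finite) dimension over k. -/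
/-!
Both `X ↦ dim Hom(P, X)` and `X ↦ dim Hom(X, P)` are additive on short exact sequences: the
first because `P` is projective, the second because a self-dual projective is also injective
(the duality exchanges projectives and injectives). Additive functions agree on objects of
finite length as soon as they agree on simple objects, and for a simple `S` the duality gives
`Hom(P, S) ≅ Hom(D S, D P) ≅ Hom(S, P)`.
-/

open CategoryTheory Limits

theorem Module.finrank_eq_add_of_exact {k U V W : Type*} [DivisionRing k]
    [AddCommGroup U] [AddCommGroup V] [AddCommGroup W] [Module k U] [Module k V] [Module k W]
    [FiniteDimensional k V] {φ : U →ₗ[k] V} {ψ : V →ₗ[k] W}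
    (hφ : Function.Injective φ) (hψ : Function.Surjective ψ) (hexact : Function.Exact φ ψ) :
    Module.finrank k V = Module.finrank k U + Module.finrank k W := by
  have h := ψ.finrank_range_add_finrank_ker
  rw [hexact.linearMap_ker_eq, LinearMap.finrank_range_of_inj hφ,
    LinearMap.range_eq_top.mpr hψ, finrank_top] at h
  omega

namespace CategoryTheory

section Additive

variable {C : Type*} [Category C] [Abelian C]

structure IsAdditiveOnObjects (φ : C → ℕ) : Prop where
  eq_zero_of_isZero : ∀ X, IsZero X → φ X = 0
  eq_add_of_mono : ∀ ⦃X Y : C⦄ (f : X ⟶ Y) [Mono f], φ Y = φ X + φ (cokernel f)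

namespace IsAdditiveOnObjects

variable {φ ψ : C → ℕ}

theorem eq_of_iso (hφ : IsAdditiveOnObjects φ) {X Y : C} (e : X ≅ Y) : φ X = φ Y := by
  rw [hφ.eq_add_of_mono e.hom, hφ.eq_zero_of_isZero _ (isZero_cokernel_of_epi e.hom),
    add_zero]

theorem eq_of_hasFiniteCompositionSeries (hφ : IsAdditiveOnObjects φ)
    (hψ : IsAdditiveOnObjects ψ) (hsimple : ∀ S : C, Simple S → φ S = ψ S) {X : C}
    (hX : HasFiniteCompositionSeries X) : φ X = ψ X := by
  obtain ⟨n, F, f, hF₀, ⟨e⟩, hf⟩ := hX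
  have hF : ∀ i, φ (F i) = ψ (F i) := by
    intro i
    induction i using Fin.induction with
    | zero => rw [hφ.eq_zero_of_isZero _ hF₀, hψ.eq_zero_of_isZero _ hF₀]
    | succ i ih =>
      have := (hf i).1
      rw [hφ.eq_add_of_mono (f i), hψ.eq_add_of_mono (f i), ih, hsimple _ (hf i).2]
  rw [← hφ.eq_of_iso e, ← hψ.eq_of_iso e, hF]

end IsAdditiveOnObjects

end Additive

section Linear

open Module

variable (k : Type*) [Field k] {A : Type*} [Category A] [Abelian A] [Linear k A]

theorem isAdditiveOnObjects_finrank_hom_left (P : A) [Projective P]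
    [∀ X, FiniteDimensional k (P ⟶ X)] :
    IsAdditiveOnObjects (fun X : A ↦ finrank k (P ⟶ X)) where
  eq_zero_of_isZero X hX :=
    have : Subsingleton (P ⟶ X) := ⟨hX.eq_of_tgt⟩
    finrank_zero_of_subsingleton
  eq_add_of_mono X Y f _ := by
    refine finrank_eq_add_of_exact (φ := Linear.rightComp k P f)
      (ψ := Linear.rightComp k P (cokernel.π f)) (fun _ _ h ↦ (cancel_mono f).mp h)
      (fun g ↦ ⟨Projective.factorThru g (cokernel.π f), Projective.factorThru_comp _ _⟩) ?_
    intro g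
    constructor
    · intro hg
      exact ⟨Abelian.monoLift f g hg, Abelian.monoLift_comp f g hg⟩
    · rintro ⟨g, rfl⟩
      simp

theorem isAdditiveOnObjects_finrank_hom_right (P : A) [Injective P]
    [∀ X, FiniteDimensional k (X ⟶ P)] :
    IsAdditiveOnObjects (fun X : A ↦ finrank k (X ⟶ P)) where
  eq_zero_of_isZero X hX :=
    have : Subsingleton (X ⟶ P) := ⟨hX.eq_of_src⟩
    finrank_zero_of_subsingleton
  eq_add_of_mono X Y f _ := by
    rw [add_comm]
    refine finrank_eq_add_of_exact (φ := Linear.leftComp k P (cokernel.π f))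
      (ψ := Linear.leftComp k P f) (fun _ _ h ↦ (cancel_epi (cokernel.π f)).mp h)
      (fun g ↦ ⟨Injective.factorThru g f, Injective.comp_factorThru _ _⟩) ?_
    intro g
    constructor
    · intro hg
      exact ⟨cokernel.desc f g hg, cokernel.π_desc f g hg⟩
    · rintro ⟨g, rfl⟩
      simp

end Linear

section Duality

variable {A : Type*} [Category A] (D : A ≌ Aᵒᵖ)

def IsSelfDual (X : A) : Prop := Nonempty ((D.functor.obj X).unop ≅ X)

theorem injective_of_isSelfDual (P : A) [Projective P] (hP : IsSelfDual D P) : Injective P :=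
  have : Projective (D.functor.obj P) := (D.map_projective_iff P).mpr ‹_›
  Injective.of_iso hP.some inferInstance

variable [Preadditive A] (k : Type*) [Field k] [Linear k A] [D.functor.Additive]

noncomputable def dualHomLinearEquiv
    (hD : ∀ (X Y : A) (c : k) (f : X ⟶ Y),
      (D.functor.map (c • f)).unop = c • (D.functor.map f).unop) (X Y : A) :
    (X ⟶ Y) ≃ₗ[k] ((D.functor.obj Y).unop ⟶ (D.functor.obj X).unop) where
  toFun f := (D.functor.map f).unop
  invFun g := D.functor.preimage g.op
  left_inv f := by simp
  right_inv g := by simp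
  map_add' f g := by simp
  map_smul' c f := hD X Y c f

theorem finrank_hom_eq_of_isSelfDual
    (hD : ∀ (X Y : A) (c : k) (f : X ⟶ Y),
      (D.functor.map (c • f)).unop = c • (D.functor.map f).unop)
    {X Y : A} (hX : IsSelfDual D X) (hY : IsSelfDual D Y) :
    Module.finrank k (X ⟶ Y) = Module.finrank k (Y ⟶ X) :=
  ((dualHomLinearEquiv D k hD X Y).trans (Linear.homCongr k hY.some hX.some)).finrank_eq

end Duality

end CategoryTheory

/-- Let `k` be a field and `A` a `k`-finite category (a `k`-linear abelian
category in which every object has a finite composition series and all Hom-spaces are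
finite-dimensional). Let `D : A ≌ Aᵒᵖ` be a `k`-linear equivalence (additive and
preserving scalar multiplication) under which every simple object is self-dual, and let
`P` be a projective self-dual object. Then for every object `X`, the `k`-vector spaces
`Hom(P, X)` and `Hom(X, P)` have equal (finite) dimension. -/
theorem finrank_hom_projective_selfdual_eq
    (k : Type*) [Field k] {A : Type*} [Category A] [Abelian A] [Linear k A]
    (hlen : ∀ X : A, HasFiniteCompositionSeries X)
    (hfin : ∀ X Y : A, FiniteDimensional k (X ⟶ Y))
    (D : A ≌ Aᵒᵖ) [D.functor.Additive]
    (hDlin : ∀ (X Y : A) (c : k) (f : X ⟶ Y),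
      (D.functor.map (c • f)).unop = c • (D.functor.map f).unop)
    (hsimple : ∀ S : A, Simple S → Nonempty ((D.functor.obj S).unop ≅ S))
    (P : A) [Projective P] (hP : Nonempty ((D.functor.obj P).unop ≅ P)) :
    ∀ X : A, Module.finrank k (P ⟶ X) = Module.finrank k (X ⟶ P) := by
  have : Injective P := injective_of_isSelfDual D P hP
  have : ∀ X, FiniteDimensional k (P ⟶ X) := hfin P
  have : ∀ X, FiniteDimensional k (X ⟶ P) := (hfin · P)
  intro X
  exact IsAdditiveOnObjects.eq_of_hasFiniteCompositionSeries
    (isAdditiveOnObjects_finrank_hom_left k P) (isAdditiveOnObjects_finrank_hom_right k P)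
    (fun S hS ↦ finrank_hom_eq_of_isSelfDual D k hDlin hP (hsimple S hS)) (hlen X)
end

section
/- Let k be a field, T and U k-linear categories with k-linear equivalences D_T : T ≌ T^op and D_U : U ≌ U^op, and let i_* : T → U be a k-linear functor with k-linear left adjoint i^* : U → T such that there is a natural isomorphism i_* ⋙ D_U ≅ D_T ⋙ (i_*)^op. Let P be a self-dual object of U (the object of U underlying D_U(P) is isomorphic to P) and suppose there is a natural isomorphism of functors from U to k-vector spaces between Z ↦ Hom_U(P, Z) and Z ↦ Hom_k(Hom_U(Z, P), k). Then for every object X of T there is a k-linear isomorphism Hom_U(P, i_*(X)) ≅ Hom_k(Hom_U(P, i_*(D X)), k), natural in X, where D X denotes the object of T underlying D_T(X). -/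
/-!
Dualizing with `D_U` and using `D_U P ≅ P` turns `Hom(Z, P)` into `Hom(P, D_U Z)`; for `Z = i_* X`
the compatibility `D_U ∘ i_* ≅ i_* ∘ D_T` identifies this with `Hom(P, i_*(D X))`. Composing the
duality `Hom(P, i_* X) ≅ Hom(i_* X, P)^*` with the dual of that identification gives the
isomorphism.
-/

open CategoryTheory

namespace CategoryTheory.Equivalence

variable {k : Type*} [Semiring k] {U : Type*} [Category U] [Preadditive U] [Linear k U]
  (D : U ≌ Uᵒᵖ) [D.functor.Additive]
  (hD : ∀ (X Y : U) (c : k) (f : X ⟶ Y), (D.functor.map (c • f)).unop = c • (D.functor.map f).unop)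
  {P : U} (α : (D.functor.obj P).unop ≅ P)

noncomputable def homSelfDualLinearEquiv (Z : U) :
    (Z ⟶ P) ≃ₗ[k] (P ⟶ (D.functor.obj Z).unop) where
  toFun g := α.inv ≫ (D.functor.map g).unop
  invFun ξ := D.functor.preimage (α.hom ≫ ξ).op
  map_add' g g' := by simp
  map_smul' c g := by simp [hD]
  left_inv g := by simp
  right_inv ξ := by simp

theorem homSelfDualLinearEquiv_comp {Z Z' : U} (ψ : Z ⟶ Z') (g : Z' ⟶ P) :
    homSelfDualLinearEquiv D hD α Z (ψ ≫ g) =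
      homSelfDualLinearEquiv D hD α Z' g ≫ (D.functor.map ψ).unop := by
  simp [homSelfDualLinearEquiv]

end CategoryTheory.Equivalence

section Pushforward

variable {k : Type*} [Semiring k] {T U : Type*} [Category T] [Category U]
  [Preadditive U] [Linear k U]
  (DT : T ≌ Tᵒᵖ) (DU : U ≌ Uᵒᵖ) [DU.functor.Additive]
  (hDU : ∀ (X Y : U) (c : k) (f : X ⟶ Y),
    (DU.functor.map (c • f)).unop = c • (DU.functor.map f).unop)
  (ipush : T ⥤ U) (comm : ipush ⋙ DU.functor ≅ DT.functor ⋙ ipush.op)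
  {P : U} (α : (DU.functor.obj P).unop ≅ P)

noncomputable def homPushforwardSelfDualLinearEquiv (X : T) :
    (ipush.obj X ⟶ P) ≃ₗ[k] (P ⟶ ipush.obj (DT.functor.obj X).unop) :=
  (DU.homSelfDualLinearEquiv hDU α (ipush.obj X)).trans
    (Linear.homCongr k (Iso.refl P) (comm.app X).unop.symm)

theorem homPushforwardSelfDualLinearEquiv_comp {X Y : T} (φ : X ⟶ Y) (g : ipush.obj Y ⟶ P) :
    homPushforwardSelfDualLinearEquiv DT DU hDU ipush comm α X (ipush.map φ ≫ g) =
      homPushforwardSelfDualLinearEquiv DT DU hDU ipush comm α Y g ≫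
        ipush.map (DT.functor.map φ).unop := by
  have comm_inv_naturality : (DU.functor.map (ipush.map φ)).unop ≫ (comm.inv.app X).unop =
      (comm.inv.app Y).unop ≫ ipush.map (DT.functor.map φ).unop :=
    congrArg Quiver.Hom.unop (comm.inv.naturality φ).symm
  simp [homPushforwardSelfDualLinearEquiv, Linear.homCongr_apply,
    Equivalence.homSelfDualLinearEquiv_comp, comm_inv_naturality]

end Pushforward

theorem hom_pushforward_dual_iso_general
    (k : Type*) [Field k] {T U : Type*} [Category T] [Category U]
    [Preadditive U] [Linear k U]
    (DT : T ≌ Tᵒᵖ) (DU : U ≌ Uᵒᵖ) [DU.functor.Additive]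
    (hDUlin : ∀ (X Y : U) (c : k) (f : X ⟶ Y),
      (DU.functor.map (c • f)).unop = c • (DU.functor.map f).unop)
    (ipush : T ⥤ U)
    (comm : ipush ⋙ DU.functor ≅ DT.functor ⋙ ipush.op)
    (P : U) (hP : Nonempty ((DU.functor.obj P).unop ≅ P))
    (η : ∀ Z : U, (P ⟶ Z) ≃ₗ[k] ((Z ⟶ P) →ₗ[k] k))
    (hη : ∀ (Z Z' : U) (φ : Z ⟶ Z') (f : P ⟶ Z) (g : Z' ⟶ P),
      η Z' (f ≫ φ) g = η Z f (φ ≫ g)) :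
    ∃ e : ∀ X : T,
        (P ⟶ ipush.obj X) ≃ₗ[k] ((P ⟶ ipush.obj ((DT.functor.obj X).unop)) →ₗ[k] k),
      ∀ (X Y : T) (φ : X ⟶ Y) (f : P ⟶ ipush.obj X)
        (ξ : P ⟶ ipush.obj ((DT.functor.obj Y).unop)),
        e Y (f ≫ ipush.map φ) ξ = e X f (ξ ≫ ipush.map (DT.functor.map φ).unop) := by
  obtain ⟨α⟩ := hP
  set μ := homPushforwardSelfDualLinearEquiv DT DU hDUlin ipush comm α
  refine ⟨fun X => (η (ipush.obj X)).trans (μ X).symm.dualMap, ?_⟩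
  intro X Y φ f ξ
  obtain ⟨g, rfl⟩ := (μ Y).surjective ξ
  simp only [LinearEquiv.trans_apply, LinearEquiv.dualMap_apply, LinearEquiv.symm_apply_apply,
    ← homPushforwardSelfDualLinearEquiv_comp, μ, hη]

/-- Let `k` be a field, `T`, `U` `k`-linear categories with `k`-linear
equivalences `D_T : T ≌ Tᵒᵖ`, `D_U : U ≌ Uᵒᵖ`, and `i_* : T ⥤ U` a `k`-linear functor
with `k`-linear left adjoint `i^* : U ⥤ T` such that `i_* ⋙ D_U ≅ D_T ⋙ (i_*)ᵒᵖ`.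
Let `P` be a self-dual object of `U` together with a natural isomorphism between
`Z ↦ Hom_U(P, Z)` and `Z ↦ Hom_k(Hom_U(Z, P), k)`. Then for every `X : T` there is a
`k`-linear isomorphism `Hom_U(P, i_* X) ≅ Hom_k(Hom_U(P, i_*(D X)), k)`, natural
in `X`. -/
theorem hom_pushforward_dual_iso
    (k : Type*) [Field k] {T U : Type*} [Category T] [Category U]
    [Preadditive T] [Preadditive U] [Linear k T] [Linear k U]
    (DT : T ≌ Tᵒᵖ) (DU : U ≌ Uᵒᵖ) [DT.functor.Additive] [DU.functor.Additive]
    (hDTlin : ∀ (X Y : T) (c : k) (f : X ⟶ Y),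
      (DT.functor.map (c • f)).unop = c • (DT.functor.map f).unop)
    (hDUlin : ∀ (X Y : U) (c : k) (f : X ⟶ Y),
      (DU.functor.map (c • f)).unop = c • (DU.functor.map f).unop)
    (istar : U ⥤ T) (ipush : T ⥤ U)
    [istar.Additive] [istar.Linear k] [ipush.Additive] [ipush.Linear k]
    (adj : istar ⊣ ipush)
    (comm : ipush ⋙ DU.functor ≅ DT.functor ⋙ ipush.op)
    (P : U) (hP : Nonempty ((DU.functor.obj P).unop ≅ P))
    (η : ∀ Z : U, (P ⟶ Z) ≃ₗ[k] ((Z ⟶ P) →ₗ[k] k))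
    (hη : ∀ (Z Z' : U) (φ : Z ⟶ Z') (f : P ⟶ Z) (g : Z' ⟶ P),
      η Z' (f ≫ φ) g = η Z f (φ ≫ g)) :
    ∃ e : ∀ X : T,
        (P ⟶ ipush.obj X) ≃ₗ[k] ((P ⟶ ipush.obj ((DT.functor.obj X).unop)) →ₗ[k] k),
      ∀ (X Y : T) (φ : X ⟶ Y) (f : P ⟶ ipush.obj X)
        (ξ : P ⟶ ipush.obj ((DT.functor.obj Y).unop)),
        e Y (f ≫ ipush.map φ) ξ = e X f (ξ ≫ ipush.map (DT.functor.map φ).unop) :=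
  hom_pushforward_dual_iso_general k DT DU hDUlin ipush comm P hP η hη
end

section
/- Let T and U be categories with equivalences D_T : T ≌ T^op and D_U : U ≌ U^op that are involutions, let i_* : T → U be a functor with left adjoint i^* : U → T such that there is a natural isomorphism i_* ⋙ D_U ≅ D_T ⋙ (i_*)^op, and let i^! := D_U ⋙ (i^*)^op ⋙ (D_T)^{-1} : U → T. Suppose T is equipped with an auto-equivalence ⟦1⟧ (shift) and that for some integer n there is a natural isomorphism i^! ≅ i^* ⋙ ⟦n⟧. Then for every self-dual object Y of U (the object of U underlying D_U(Y) is isomorphic to Y), the object of T underlying D_T(i^*(Y)) is isomorphic to (i^*(Y))⟦n⟧. -/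
/-!
An involutive duality `D : A ≌ Aᵒᵖ` agrees, up to natural isomorphism, with its own inverse:
`D ⋙ Dᵒᵖ ≅ 𝟭` forces `Dᵒᵖ ≅ D⁻¹`. Hence `D_T (i^* Y) ≅ D_T⁻¹ (i^* Y)`, and for self-dual `Y`
the latter is `D_T⁻¹ (i^* (D_U Y)) = i^! Y ≅ (i^* Y)⟦n⟧`.
-/

open CategoryTheory

/-- An equivalence `D : A ≌ Aᵒᵖ` is an involution: applying `D` twice (the composite of
`D` with the opposite of `D`, viewed as an endofunctor of `A`) is naturally isomorphic to
the identity functor of `A`. -/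
def CategoryTheory.Equivalence.IsInvolution {A : Type*} [Category A] (D : A ≌ Aᵒᵖ) : Prop :=
  Nonempty (D.functor ⋙ D.functor.leftOp ≅ 𝟭 A)

theorem CategoryTheory.Equivalence.IsInvolution.nonempty_functor_leftOp_iso_inverse
    {A : Type*} [Category A] {D : A ≌ Aᵒᵖ} (hD : D.IsInvolution) :
    Nonempty (D.functor.leftOp ≅ D.inverse) :=
  hD.map fun h => Iso.isoInverseComp h ≪≫ Functor.rightUnitor _

theorem dual_pullback_selfdual_iso_shift_general
    {T U : Type*} [Category T] [Category U]
    (DT : T ≌ Tᵒᵖ) (DU : U ≌ Uᵒᵖ)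
    (hDT : DT.IsInvolution)
    (istar : U ⥤ T)
    [HasShift T ℤ] (n : ℤ)
    (hshift : DU.functor ⋙ istar.op ⋙ DT.inverse ≅ istar ⋙ shiftFunctor T n) :
    ∀ Y : U, Nonempty ((DU.functor.obj Y).unop ≅ Y) →
      Nonempty ((DT.functor.obj (istar.obj Y)).unop ≅
        (shiftFunctor T n).obj (istar.obj Y)) := by
  rintro Y ⟨selfDual⟩
  obtain ⟨dualIsoInverse⟩ := hDT.nonempty_functor_leftOp_iso_inverse
  exact ⟨calc (DT.functor.obj (istar.obj Y)).unop
        ≅ DT.inverse.obj (.op (istar.obj Y)) := dualIsoInverse.app (.op (istar.obj Y))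
      _ ≅ DT.inverse.obj (.op (istar.obj (DU.functor.obj Y).unop)) :=
        DT.inverse.mapIso (istar.mapIso selfDual).op
      _ ≅ (shiftFunctor T n).obj (istar.obj Y) := hshift.app Y⟩

/-- Let `T`, `U` be categories with involutive equivalences
`D_T : T ≌ Tᵒᵖ`, `D_U : U ≌ Uᵒᵖ`, let `i_* : T ⥤ U` have a left adjoint `i^* : U ⥤ T`
with `i_* ⋙ D_U ≅ D_T ⋙ (i_*)ᵒᵖ`, and set `i^! := D_U ⋙ (i^*)ᵒᵖ ⋙ (D_T)⁻¹`. Suppose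
`T` carries a shift and for some integer `n` there is a natural isomorphism
`i^! ≅ i^* ⋙ ⟦n⟧`. Then for every self-dual object `Y` of `U`, the object underlying
`D_T(i^* Y)` is isomorphic to `(i^* Y)⟦n⟧`. -/
theorem dual_pullback_selfdual_iso_shift
    {T U : Type*} [Category T] [Category U]
    (DT : T ≌ Tᵒᵖ) (DU : U ≌ Uᵒᵖ)
    (hDT : DT.IsInvolution) (hDU : DU.IsInvolution)
    (istar : U ⥤ T) (ipush : T ⥤ U) (adj : istar ⊣ ipush)
    (comm : ipush ⋙ DU.functor ≅ DT.functor ⋙ ipush.op)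
    [HasShift T ℤ] (n : ℤ)
    (hshift : DU.functor ⋙ istar.op ⋙ DT.inverse ≅ istar ⋙ shiftFunctor T n) :
    ∀ Y : U, Nonempty ((DU.functor.obj Y).unop ≅ Y) →
      Nonempty ((DT.functor.obj (istar.obj Y)).unop ≅
        (shiftFunctor T n).obj (istar.obj Y)) :=
  dual_pullback_selfdual_iso_shift_general DT DU hDT istar n hshift
end

section
/- Let k be a field, T and U k-linear categories with k-linear involutive equivalences D_T : T ≌ T^op and D_U : U ≌ U^op, and i_* : T → U a k-linear functor with k-linear left adjoint i^* : U → T such that there is a natural isomorphism i_* ⋙ D_U ≅ D_T ⋙ (i_*)^op. Let i^! := D_U ⋙ (i^*)^op ⋙ (D_T)^{-1} : U → T, suppose T has a shift auto-equivalence ⟦1⟧ and that for some integer n there is a natural isomorphism i^! ≅ i^* ⋙ ⟦n⟧. Let P be a self-dual object of U with a natural isomorphism of functors from U to k-vector spaces between Z ↦ Hom_U(P, Z) and Z ↦ Hom_k(Hom_U(Z, P), k). Then for every self-dual object Y of U there is a k-linear isomorphism Hom_U(P, i_*(i^*(Y))) ≅ Hom_k(Hom_U(P, i_*((i^*(Y))⟦n⟧)),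 k). -/
/-!
Self-duality of `Y` together with `i^! ≅ i^* ⋙ ⟦n⟧` identifies `D_T(i^* Y)` with `(i^* Y)⟦n⟧`,
and `i_*` commutes with the dualities, so `D_U(i_* i^* Y) ≅ i_*((i^* Y)⟦n⟧)`. Since `D_U` is
fully faithful and `P` is self-dual, `Hom(i_* i^* Y, P) ≅ Hom(P, i_*((i^* Y)⟦n⟧))`; dualising and
composing with the Serre-type isomorphism `Hom(P, Z) ≅ Hom(Z, P)^*` at `Z = i_* i^* Y` gives the
result.
-/

open CategoryTheory

namespace CategoryTheory.Equivalence

variable {A B : Type*} [Category A] [Category B]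

def inverseObjOpIso (D : A ≌ Aᵒᵖ) (ι : D.functor ⋙ D.functor.leftOp ≅ 𝟭 A) (X : A) :
    D.inverse.obj (Opposite.op X) ≅ (D.functor.obj X).unop :=
  D.inverse.mapIso (ι.app X).op ≪≫ (D.unitIso.app (D.functor.obj X).unop).symm

noncomputable def unopMapLinearEquiv (k : Type*) [Semiring k] [Preadditive A] [Preadditive B]
    [Linear k A] [Linear k B] (D : A ≌ Bᵒᵖ) [D.functor.Additive]
    (hlin : ∀ (X Y : A) (c : k) (f : X ⟶ Y),
      (D.functor.map (c • f)).unop = c • (D.functor.map f).unop)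
    (X Y : A) :
    (X ⟶ Y) ≃ₗ[k] ((D.functor.obj Y).unop ⟶ (D.functor.obj X).unop) where
  toFun f := (D.functor.map f).unop
  invFun g := D.functor.preimage g.op
  left_inv f := by simp
  right_inv g := by simp
  map_add' f g := by simp
  map_smul' c f := hlin _ _ c f

def unopFunctorObjIsoOfSelfDual {T U : Type*} [Category T] [Category U]
    (DT : T ≌ Tᵒᵖ) (DU : U ⥤ Uᵒᵖ) (ι : DT.functor ⋙ DT.functor.leftOp ≅ 𝟭 T)
    {F : U ⥤ T} {G : T ⥤ T} (e : DU ⋙ F.op ⋙ DT.inverse ≅ F ⋙ G)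
    {Y : U} (hY : (DU.obj Y).unop ≅ Y) :
    (DT.functor.obj (F.obj Y)).unop ≅ G.obj (F.obj Y) :=
  (DT.inverseObjOpIso ι (F.obj Y)).symm ≪≫ DT.inverse.mapIso (F.mapIso hY).op ≪≫ e.app Y

noncomputable def homLinearEquivDualOfSelfDual (k : Type*) [CommSemiring k] [Preadditive A]
    [Linear k A] (D : A ≌ Aᵒᵖ) [D.functor.Additive]
    (hlin : ∀ (X Y : A) (c : k) (f : X ⟶ Y),
      (D.functor.map (c • f)).unop = c • (D.functor.map f).unop)
    {P Z W : A} (η : (P ⟶ Z) ≃ₗ[k] ((Z ⟶ P) →ₗ[k] k))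
    (hP : (D.functor.obj P).unop ≅ P) (hZ : (D.functor.obj Z).unop ≅ W) :
    (P ⟶ Z) ≃ₗ[k] ((P ⟶ W) →ₗ[k] k) :=
  η ≪≫ₗ (D.unopMapLinearEquiv k hlin Z P ≪≫ₗ Linear.homCongr k hP hZ).symm.dualMap

end CategoryTheory.Equivalence

theorem poincare_duality_pullback_selfdual_general
    (k : Type*) [Field k] {T U : Type*} [Category T] [Category U]
    [Preadditive U] [Linear k U]
    (DT : T ≌ Tᵒᵖ) (DU : U ≌ Uᵒᵖ) [DU.functor.Additive]
    (hDUlin : ∀ (X Y : U) (c : k) (f : X ⟶ Y),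
      (DU.functor.map (c • f)).unop = c • (DU.functor.map f).unop)
    (hDT : DT.IsInvolution)
    (istar : U ⥤ T) (ipush : T ⥤ U)
    (comm : ipush ⋙ DU.functor ≅ DT.functor ⋙ ipush.op)
    [HasShift T ℤ] (n : ℤ)
    (hshift : DU.functor ⋙ istar.op ⋙ DT.inverse ≅ istar ⋙ shiftFunctor T n)
    (P : U) (hP : Nonempty ((DU.functor.obj P).unop ≅ P))
    (η : ∀ Z : U, (P ⟶ Z) ≃ₗ[k] ((Z ⟶ P) →ₗ[k] k)) :
    ∀ Y : U, Nonempty ((DU.functor.obj Y).unop ≅ Y) →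
      Nonempty ((P ⟶ ipush.obj (istar.obj Y)) ≃ₗ[k]
        ((P ⟶ ipush.obj ((shiftFunctor T n).obj (istar.obj Y))) →ₗ[k] k)) := by
  rintro Y ⟨hY⟩
  obtain ⟨ιT⟩ := hDT
  obtain ⟨hP⟩ := hP
  let dualPushIso : (DU.functor.obj (ipush.obj (istar.obj Y))).unop ≅
      ipush.obj ((shiftFunctor T n).obj (istar.obj Y)) :=
    (comm.app _).unop.symm ≪≫
      ipush.mapIso (Equivalence.unopFunctorObjIsoOfSelfDual DT DU.functor ιT hshift hY)
  exact ⟨DU.homLinearEquivDualOfSelfDual k hDUlin (η _) hP dualPushIso⟩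

/-- Let `k` be a field, `T`, `U` `k`-linear categories with `k`-linear
involutive equivalences `D_T : T ≌ Tᵒᵖ`, `D_U : U ≌ Uᵒᵖ`, and `i_* : T ⥤ U` a `k`-linear
functor with `k`-linear left adjoint `i^* : U ⥤ T` such that
`i_* ⋙ D_U ≅ D_T ⋙ (i_*)ᵒᵖ`. Let `i^! := D_U ⋙ (i^*)ᵒᵖ ⋙ (D_T)⁻¹`, suppose `T` has a
shift and `i^! ≅ i^* ⋙ ⟦n⟧` for some integer `n`. Let `P` be a self-dual object of `U`
with a natural isomorphism between `Z ↦ Hom_U(P, Z)` and `Z ↦ Hom_k(Hom_U(Z, P), k)`.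
Then for every self-dual object `Y` of `U` there is a `k`-linear isomorphism
`Hom_U(P, i_* i^* Y) ≅ Hom_k(Hom_U(P, i_*((i^* Y)⟦n⟧)), k)`. -/
theorem poincare_duality_pullback_selfdual
    (k : Type*) [Field k] {T U : Type*} [Category T] [Category U]
    [Preadditive T] [Preadditive U] [Linear k T] [Linear k U]
    (DT : T ≌ Tᵒᵖ) (DU : U ≌ Uᵒᵖ) [DT.functor.Additive] [DU.functor.Additive]
    (hDTlin : ∀ (X Y : T) (c : k) (f : X ⟶ Y),
      (DT.functor.map (c • f)).unop = c • (DT.functor.map f).unop)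
    (hDUlin : ∀ (X Y : U) (c : k) (f : X ⟶ Y),
      (DU.functor.map (c • f)).unop = c • (DU.functor.map f).unop)
    (hDT : DT.IsInvolution) (hDU : DU.IsInvolution)
    (istar : U ⥤ T) (ipush : T ⥤ U)
    [istar.Additive] [istar.Linear k] [ipush.Additive] [ipush.Linear k]
    (adj : istar ⊣ ipush)
    (comm : ipush ⋙ DU.functor ≅ DT.functor ⋙ ipush.op)
    [HasShift T ℤ] (n : ℤ)
    (hshift : DU.functor ⋙ istar.op ⋙ DT.inverse ≅ istar ⋙ shiftFunctor T n)
    (P : U) (hP : Nonempty ((DU.functor.obj P).unop ≅ P))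
    (η : ∀ Z : U, (P ⟶ Z) ≃ₗ[k] ((Z ⟶ P) →ₗ[k] k))
    (hη : ∀ (Z Z' : U) (φ : Z ⟶ Z') (f : P ⟶ Z) (g : Z' ⟶ P),
      η Z' (f ≫ φ) g = η Z f (φ ≫ g)) :
    ∀ Y : U, Nonempty ((DU.functor.obj Y).unop ≅ Y) →
      Nonempty ((P ⟶ ipush.obj (istar.obj Y)) ≃ₗ[k]
        ((P ⟶ ipush.obj ((shiftFunctor T n).obj (istar.obj Y))) →ₗ[k] k)) :=
  poincare_duality_pullback_selfdual_general k DT DU hDUlin hDT istar ipush comm n hshift P hP η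
end

section
/- Let k be a field, and let T and U be k-linear categories equipped with k-linear involutive equivalences D_T : T ≌ T^op and D_U : U ≌ U^op, where U also carries a shift auto-equivalence ⟦1⟧. Let i^* : T → U be a k-linear functor and define i^! := D_T ⋙ (i^*)^op ⋙ (D_U)^{-1} : T → U. Assume that for some integer n there is a natural isomorphism i^! ≅ i^* ⋙ ⟦-n⟧. Let P be a self-dual object of U with a natural isomorphism of functors from U to k-vector spaces between Z ↦ Hom_U(P, Z) and Z ↦ Hom_k(Hom_U(Z, P), k). Then for every object X of T there is a k-linear isomorphism Hom_U(P, i^!(X)) ≅ Hom_k(Hom_U(P, (i^!(D X))⟦n⟧), k), natural in X, where D X denotes the object of T underlying D_T(X). -/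
/-!
Duality `η` identifies `Hom(P, i^! X)` with the dual of `Hom(i^! X, P)`. As `D_U` is a
contravariant equivalence and `P ≅ D_U P`, we get `Hom(D_U⁻¹ Z, P) ≅ Hom(P, Z)`, naturally in `Z`;
with `Z = i^*(D X)` and `i^* ≅ i^! ⋙ ⟦n⟧` this identifies `Hom(i^! X, P)` with
`Hom(P, i^!(D X)⟦n⟧)`. Every step is natural in `X`.
-/

open CategoryTheory

namespace CategoryTheory

/-- `k`-linearity of a contravariant functor, read through `unop`: Mathlib puts no `Linear`
structure on `Bᵒᵖ`, so `Functor.Linear` does not apply. -/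
def Functor.UnopLinear (k : Type*) [Semiring k] {A B : Type*} [Category A] [Category B]
    [Preadditive A] [CategoryTheory.Linear k A] [Preadditive B] [CategoryTheory.Linear k B]
    (F : A ⥤ Bᵒᵖ) : Prop :=
  ∀ (X Y : A) (c : k) (f : X ⟶ Y), (F.map (c • f)).unop = c • (F.map f).unop

variable {k : Type*} [Semiring k] {A B : Type*} [Category A] [Category B]
  [Preadditive A] [CategoryTheory.Linear k A] [Preadditive B] [CategoryTheory.Linear k B]

@[simps]
def Functor.FullyFaithful.unopHomLinearEquiv {F : A ⥤ Bᵒᵖ} [F.Additive] (hF : F.FullyFaithful)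
    (hlin : F.UnopLinear k) (X Y : A) :
    (X ⟶ Y) ≃ₗ[k] ((F.obj Y).unop ⟶ (F.obj X).unop) where
  toFun f := (F.map f).unop
  invFun g := hF.preimage g.op
  map_add' f g := by simp
  map_smul' := hlin X Y
  left_inv f := by simp
  right_inv g := by simp

namespace Equivalence

variable (D : A ≌ Aᵒᵖ) [D.functor.Additive]

def selfDualHomLinearEquiv (hD : D.functor.UnopLinear k) {P : A}
    (p : (D.functor.obj P).unop ≅ P) (Z : A) :
    (P ⟶ Z) ≃ₗ[k] (D.inverse.obj (Opposite.op Z) ⟶ P) :=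
  (D.fullyFaithfulFunctor.unopHomLinearEquiv hD _ _ ≪≫ₗ
    Linear.homCongr k p (D.counitIso.app (Opposite.op Z)).unop.symm).symm

theorem selfDualHomLinearEquiv_symm_apply (hD : D.functor.UnopLinear k) {P : A}
    (p : (D.functor.obj P).unop ≅ P) {Z : A} (h : D.inverse.obj (Opposite.op Z) ⟶ P) :
    (D.selfDualHomLinearEquiv hD p Z).symm h =
      p.inv ≫ (D.functor.map h).unop ≫ (D.counitIso.inv.app (Opposite.op Z)).unop := by
  simp [selfDualHomLinearEquiv, Linear.homCongr_apply]

theorem selfDualHomLinearEquiv_comp (hD : D.functor.UnopLinear k) {P : A}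
    (p : (D.functor.obj P).unop ≅ P) {Z Z' : A} (g : P ⟶ Z) (ψ : Z ⟶ Z') :
    D.selfDualHomLinearEquiv hD p Z' (g ≫ ψ) =
      D.inverse.map ψ.op ≫ D.selfDualHomLinearEquiv hD p Z g := by
  have hcounit : (D.functor.map (D.inverse.map ψ.op)).unop ≫
      (D.counitIso.inv.app (Opposite.op Z')).unop =
        (D.counitIso.inv.app (Opposite.op Z)).unop ≫ ψ :=
    congrArg Quiver.Hom.unop (D.counitInv_naturality ψ.op)
  apply (D.selfDualHomLinearEquiv hD p Z').symm.injective
  conv_lhs =>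
    rw [LinearEquiv.symm_apply_apply, ← (D.selfDualHomLinearEquiv hD p Z).symm_apply_apply g]
  simp only [selfDualHomLinearEquiv_symm_apply, Functor.map_comp, unop_comp, Category.assoc,
    hcounit]

end Equivalence

end CategoryTheory

theorem poincare_duality_shriek_natural_general
    (k : Type*) [Field k] {T U : Type*} [Category T] [Category U]
    [Preadditive U] [Linear k U]
    (DT : T ≌ Tᵒᵖ) (DU : U ≌ Uᵒᵖ) [DU.functor.Additive]
    (hDUlin : ∀ (X Y : U) (c : k) (f : X ⟶ Y),
      (DU.functor.map (c • f)).unop = c • (DU.functor.map f).unop)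
    [HasShift U ℤ]
    (istar : T ⥤ U) (n : ℤ)
    (hshift : DT.functor ⋙ istar.op ⋙ DU.inverse ≅ istar ⋙ shiftFunctor U (-n))
    (P : U) (hP : Nonempty ((DU.functor.obj P).unop ≅ P))
    (η : ∀ Z : U, (P ⟶ Z) ≃ₗ[k] ((Z ⟶ P) →ₗ[k] k))
    (hη : ∀ (Z Z' : U) (φ : Z ⟶ Z') (f : P ⟶ Z) (g : Z' ⟶ P),
      η Z' (f ≫ φ) g = η Z f (φ ≫ g)) :
    ∃ e : ∀ X : T,
        (P ⟶ (DT.functor ⋙ istar.op ⋙ DU.inverse).obj X) ≃ₗ[k]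
          ((P ⟶ (shiftFunctor U n).obj
            ((DT.functor ⋙ istar.op ⋙ DU.inverse).obj ((DT.functor.obj X).unop))) →ₗ[k] k),
      ∀ (X Y : T) (φ : X ⟶ Y) (f : P ⟶ (DT.functor ⋙ istar.op ⋙ DU.inverse).obj X)
        (ξ : P ⟶ (shiftFunctor U n).obj
          ((DT.functor ⋙ istar.op ⋙ DU.inverse).obj ((DT.functor.obj Y).unop))),
        e Y (f ≫ (DT.functor ⋙ istar.op ⋙ DU.inverse).map φ) ξ =
          e X f (ξ ≫ (shiftFunctor U n).map
            ((DT.functor ⋙ istar.op ⋙ DU.inverse).map (DT.functor.map φ).unop)) := by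
  obtain ⟨p⟩ := hP
  set F : T ⥤ U := DT.functor ⋙ istar.op ⋙ DU.inverse
  let c : F ⋙ shiftFunctor U n ≅ istar := Iso.compInverseIso (H := (shiftEquiv U n).symm) hshift
  let θ X : (P ⟶ (shiftFunctor U n).obj (F.obj (DT.functor.obj X).unop)) ≃ₗ[k] (F.obj X ⟶ P) :=
    Linear.homCongr k (Iso.refl P) (c.app _) ≪≫ₗ DU.selfDualHomLinearEquiv hDUlin p _
  have hθ : ∀ (X Y : T) (φ : X ⟶ Y) ξ, F.map φ ≫ θ Y ξ =
      θ X (ξ ≫ (shiftFunctor U n).map (F.map (DT.functor.map φ).unop)) := by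
    intro X Y φ ξ
    simp only [θ, LinearEquiv.trans_apply, Linear.homCongr_apply, Iso.refl_inv, Category.id_comp,
      Iso.app_hom, Category.assoc]
    rw [← Functor.comp_map, c.hom.naturality, ← Category.assoc ξ,
      DU.selfDualHomLinearEquiv_comp hDUlin p _ (istar.map _)]
    -- `F.map φ` unfolds to `DU.inverse.map (istar.map (DT.functor.map φ).unop).op`
    rfl
  refine ⟨fun X => η (F.obj X) ≪≫ₗ (θ X).dualMap, fun X Y φ f ξ => ?_⟩
  simp only [LinearEquiv.trans_apply, LinearEquiv.dualMap_apply, hη, hθ]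

/-- Let `k` be a field, `T`, `U` `k`-linear categories with `k`-linear
involutive equivalences `D_T : T ≌ Tᵒᵖ`, `D_U : U ≌ Uᵒᵖ`, where `U` carries a shift.
Let `i^* : T ⥤ U` be a `k`-linear functor and `i^! := D_T ⋙ (i^*)ᵒᵖ ⋙ (D_U)⁻¹ : T ⥤ U`;
assume `i^! ≅ i^* ⋙ ⟦-n⟧` for some integer `n`. Let `P` be a self-dual object of `U` with
a natural isomorphism between `Z ↦ Hom_U(P, Z)` and `Z ↦ Hom_k(Hom_U(Z, P), k)`. Then for
every `X : T` there is a `k`-linear isomorphism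
`Hom_U(P, i^! X) ≅ Hom_k(Hom_U(P, (i^!(D X))⟦n⟧), k)`, natural in `X`. -/
theorem poincare_duality_shriek_natural
    (k : Type*) [Field k] {T U : Type*} [Category T] [Category U]
    [Preadditive T] [Preadditive U] [Linear k T] [Linear k U]
    (DT : T ≌ Tᵒᵖ) (DU : U ≌ Uᵒᵖ) [DT.functor.Additive] [DU.functor.Additive]
    (hDTlin : ∀ (X Y : T) (c : k) (f : X ⟶ Y),
      (DT.functor.map (c • f)).unop = c • (DT.functor.map f).unop)
    (hDUlin : ∀ (X Y : U) (c : k) (f : X ⟶ Y),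
      (DU.functor.map (c • f)).unop = c • (DU.functor.map f).unop)
    (hDT : DT.IsInvolution) (hDU : DU.IsInvolution)
    [HasShift U ℤ]
    (istar : T ⥤ U) [istar.Additive] [istar.Linear k] (n : ℤ)
    (hshift : DT.functor ⋙ istar.op ⋙ DU.inverse ≅ istar ⋙ shiftFunctor U (-n))
    (P : U) (hP : Nonempty ((DU.functor.obj P).unop ≅ P))
    (η : ∀ Z : U, (P ⟶ Z) ≃ₗ[k] ((Z ⟶ P) →ₗ[k] k))
    (hη : ∀ (Z Z' : U) (φ : Z ⟶ Z') (f : P ⟶ Z) (g : Z' ⟶ P),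
      η Z' (f ≫ φ) g = η Z f (φ ≫ g)) :
    ∃ e : ∀ X : T,
        (P ⟶ (DT.functor ⋙ istar.op ⋙ DU.inverse).obj X) ≃ₗ[k]
          ((P ⟶ (shiftFunctor U n).obj
            ((DT.functor ⋙ istar.op ⋙ DU.inverse).obj ((DT.functor.obj X).unop))) →ₗ[k] k),
      ∀ (X Y : T) (φ : X ⟶ Y) (f : P ⟶ (DT.functor ⋙ istar.op ⋙ DU.inverse).obj X)
        (ξ : P ⟶ (shiftFunctor U n).obj
          ((DT.functor ⋙ istar.op ⋙ DU.inverse).obj ((DT.functor.obj Y).unop))),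
        e Y (f ≫ (DT.functor ⋙ istar.op ⋙ DU.inverse).map φ) ξ =
          e X f (ξ ≫ (shiftFunctor U n).map
            ((DT.functor ⋙ istar.op ⋙ DU.inverse).map (DT.functor.map φ).unop)) :=
  poincare_duality_shriek_natural_general k DT DU hDUlin istar n hshift P hP η hη
end
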